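/- Let T > 0 and λ ∈ ℝ. Let α, β : ℝ → ℝ be continuously differentiable and T-periodic, and let c : ℝ → ℝ satisfy α'(t) + λ·α(t) = c(t) and −β'(t) + λ·β(t) = α(t) for all t ∈ ℝ. Then ∫₀ᵀ α(t)² dt = ∫₀ᵀ β(t)·c(t) dt. -/

import Mathlib

/-! Eliminating `c` and `α` through the two equations gives `β c = α² + (α β)'`, and the
derivative of the periodic function `α β` integrates to zero over a period. -/

open Function

theorem Function.Periodic.intervalIntegral_deriv_eq_zero {E : Type*} [NormedAddCommGroup E]
    [NormedSpace ℝ E] [CompleteSpace E] {f : ℝ → E} {T : ℝ} (hf : ContDiff ℝ 1 f)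
    (hper : Periodic f T) (a : ℝ) : ∫ t in a..a + T, deriv f t = 0 := by
  rw [intervalIntegral.integral_deriv_eq_sub (fun t _ => hf.differentiable one_ne_zero t)
    ((hf.continuous_deriv le_rfl).intervalIntegrable _ _), hper a, sub_self]

theorem stmt_11_general (T : ℝ) (lam : ℝ) (α β c : ℝ → ℝ)
    (hα : ContDiff ℝ 1 α) (hβ : ContDiff ℝ 1 β)
    (hαper : ∀ t, α (t + T) = α t) (hβper : ∀ t, β (t + T) = β t)
    (h1 : ∀ t, deriv α t + lam * α t = c t)
    (h2 : ∀ t, -deriv β t + lam * β t = α t) :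
    ∫ t in (0:ℝ)..T, α t ^ 2 = ∫ t in (0:ℝ)..T, β t * c t := by
  have hαd : Differentiable ℝ α := hα.differentiable one_ne_zero
  have hβd : Differentiable ℝ β := hβ.differentiable one_ne_zero
  have hαβ : ContDiff ℝ 1 fun t => α t * β t := hα.mul hβ
  have hβc : ∀ t, β t * c t = α t ^ 2 + deriv (fun t => α t * β t) t := by
    intro t
    rw [deriv_fun_mul (hαd t) (hβd t)]
    linear_combination α t * h2 t - β t * h1 t
  have hperiodic : Periodic (fun t => α t * β t) T := fun t => by simp only [hαper, hβper]
  have hzero := hperiodic.intervalIntegral_deriv_eq_zero hαβ 0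
  rw [zero_add] at hzero
  rw [intervalIntegral.integral_congr fun t _ => hβc t,
    intervalIntegral.integral_add (f := fun t => α t ^ 2)
      ((hαd.continuous.pow 2).intervalIntegrable _ _)
      ((hαβ.continuous_deriv le_rfl).intervalIntegrable _ _), hzero, add_zero]

/-- Integration by parts identity: if `α' + λα = c` and `−β' + λβ = α` with `α, β`
continuously differentiable and `T`-periodic, then `∫₀ᵀ α² = ∫₀ᵀ β c`. -/
theorem stmt_11 (T : ℝ) (hT : 0 < T) (lam : ℝ) (α β c : ℝ → ℝ)
    (hα : ContDiff ℝ 1 α) (hβ : ContDiff ℝ 1 β)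
    (hαper : ∀ t, α (t + T) = α t) (hβper : ∀ t, β (t + T) = β t)
    (h1 : ∀ t, deriv α t + lam * α t = c t)
    (h2 : ∀ t, -deriv β t + lam * β t = α t) :
    ∫ t in (0:ℝ)..T, α t ^ 2 = ∫ t in (0:ℝ)..T, β t * c t :=
  stmt_11_general T lam α β c hα hβ hαper hβper h1 h2
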